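/- arXiv:1703.01763 — 2 statements merged into one kernel-verified Lean document; each statement's English description precedes it below -/
import Mathlib

section
/- The set of continuity points (with respect to the Hausdorff metric on the image) of a lower semi-continuous map from a metric space to the set of closed subsets of a compact metric space is residual. -/
open TopologicalSpace Metric Set

/-- In a compact metric space, the cardinality of `s`-separated finite sets is
uniformly bounded. -/
lemma sep_bound {X : Type*} [MetricSpace X] [CompactSpace X] {s : ℝ} (hs : 0 < s) :
    ∃ N : ℕ, ∀ P : Finset X, (∀ p ∈ P, ∀ q ∈ P, p ≠ q → s < dist p q) → P.card ≤ N := by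
  obtain ⟨t, htf, htc⟩ := Metric.totallyBounded_iff.1
    (isCompact_univ (X := X)).totallyBounded (s/2) (by linarith)
  refine ⟨htf.toFinset.card, fun P hP => ?_⟩
  have hc : ∀ p : X, ∃ c, c ∈ t ∧ dist p c < s/2 := by
    intro p
    have := htc (mem_univ p)
    simpa [Metric.mem_ball] using this
  choose f hf hfd using hc
  refine Finset.card_le_card_of_injOn f (fun a _ => htf.mem_toFinset.2 (hf a)) ?_
  intro p hp q hq hpq
  by_contra hne
  have h1 : dist p q ≤ dist p (f p) + dist q (f q) := by
    rw [dist_comm q (f q), ← hpq]; exact dist_triangle _ _ _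
  linarith [hfd p, hfd q, hP p hp q hq hne]

/-- Density core: in any ball we can find a point `F₁` near which `O` is
`ε`-upper-semicontinuous. -/
lemma dense_aux {T X : Type*} [MetricSpace T] [MetricSpace X] [CompactSpace X]
    (O : T → NonemptyCompacts X)
    (hlsc : ∀ F : T, ∀ ε > (0 : ℝ), ∃ δ > (0 : ℝ), ∀ F' : T, dist F F' < δ →
      ∀ x ∈ (O F : Set X), ∃ y ∈ (O F' : Set X), dist x y < ε)
    {ε r : ℝ} (hε : 0 < ε) (F₀ : T) (hr : 0 < r) :
    ∃ F₁ δ, 0 < δ ∧ Metric.ball F₁ δ ⊆ Metric.ball F₀ r ∧ F₁ ∈ Metric.ball F₀ r ∧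
      ∀ F', dist F₁ F' < δ → ∀ z ∈ (O F' : Set X), ∃ x ∈ (O F₁ : Set X), dist z x < ε := by
  classical
  set s := ε/2 with hs_def
  have hs : 0 < s := by positivity
  obtain ⟨N, hN⟩ := sep_bound (X := X) hs
  set A : Set ℕ := {k | ∃ F ∈ Metric.ball F₀ r, ∃ P : Finset X, ↑P ⊆ (O F : Set X) ∧
      (∀ p ∈ P, ∀ q ∈ P, p ≠ q → s < dist p q) ∧ P.card = k} with hA_def
  have hA0 : 0 ∈ A := ⟨F₀, Metric.mem_ball_self hr, ∅, by simp, by simp, rfl⟩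
  have hAbdd : BddAbove A := ⟨N, fun k hk => by
    obtain ⟨F, _, P, _, hsep, hcard⟩ := hk
    exact hcard ▸ hN P hsep⟩
  have hm := Nat.sSup_mem ⟨0, hA0⟩ hAbdd
  set m := sSup A with hm_def
  obtain ⟨F₁, hF₁, P, hPsub, hPsep, hPcard⟩ := hm
  -- a positive gap σ above s for the pairwise distances in P
  have hσ : ∃ σ > (0:ℝ), ∀ p ∈ P, ∀ q ∈ P, p ≠ q → s + σ ≤ dist p q := by
    set D := (P ×ˢ P).filter (fun pq => pq.1 ≠ pq.2) with hD
    rcases D.eq_empty_or_nonempty with hDe | hDne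
    · refine ⟨1, one_pos, fun p hp q hq hpq => absurd ?_ (Finset.notMem_empty (p, q))⟩
      rw [← hDe]
      exact Finset.mem_filter.2 ⟨Finset.mem_product.2 ⟨hp, hq⟩, hpq⟩
    · obtain ⟨b, hb, hmin⟩ := D.exists_min_image (fun pq => dist pq.1 pq.2) hDne
      obtain ⟨hbP, hbne⟩ := Finset.mem_filter.1 hb
      obtain ⟨hb1, hb2⟩ := Finset.mem_product.1 hbP
      refine ⟨dist b.1 b.2 - s, by linarith [hPsep b.1 hb1 b.2 hb2 hbne], ?_⟩
      intro p hp q hq hpq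
      have := hmin (p, q) (Finset.mem_filter.2 ⟨Finset.mem_product.2 ⟨hp, hq⟩, hpq⟩)
      simpa using by linarith [this]
  obtain ⟨σ, hσ0, hσsep⟩ := hσ
  set η := min σ ε / 4 with hη_def
  have hη0 : 0 < η := by positivity
  have hη1 : 2*η < σ := by
    have := min_le_left σ ε
    rw [hη_def]; linarith
  have hη2 : η < ε - s := by
    have := min_le_right σ ε
    rw [hη_def, hs_def]; linarith
  obtain ⟨δ₀, hδ₀0, hδ₀⟩ := hlsc F₁ η hη0
  have hdF₁ : dist F₁ F₀ < r := Metric.mem_ball.1 hF₁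
  set δ := min δ₀ (r - dist F₁ F₀) with hδ_def
  have hδ0 : 0 < δ := lt_min hδ₀0 (by linarith)
  have hδle : δ ≤ r - dist F₁ F₀ := min_le_right _ _
  refine ⟨F₁, δ, hδ0, ?_, hF₁, ?_⟩
  · intro F' hF'
    rw [Metric.mem_ball] at hF' ⊢
    have := dist_triangle F' F₁ F₀
    linarith
  · intro F' hd z hz
    by_contra hcon
    push_neg at hcon
    have hF'ball : F' ∈ Metric.ball F₀ r := by
      rw [Metric.mem_ball]
      have h1 := dist_triangle F' F₁ F₀
      rw [dist_comm F' F₁] at h1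
      linarith
    have hy : ∀ p : X, p ∈ P → ∃ y, y ∈ (O F' : Set X) ∧ dist p y < η := by
      intro p hp
      obtain ⟨y, hy1, hy2⟩ := hδ₀ F' (lt_of_lt_of_le hd (min_le_left _ _)) p (hPsub hp)
      exact ⟨y, hy1, hy2⟩
    choose y hy1 hy2 using hy
    set g : {x // x ∈ P} → X := fun p => y p.1 p.2 with hg_def
    have hgsep : ∀ p₁ p₂ : {x // x ∈ P}, p₁.1 ≠ p₂.1 → s < dist (g p₁) (g p₂) := by
      intro p₁ p₂ hne
      have h1 := hσsep p₁.1 p₁.2 p₂.1 p₂.2 hne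
      have h2 := hy2 p₁.1 p₁.2
      have h3 := hy2 p₂.1 p₂.2
      have h4 := dist_triangle p₁.1 (g p₁) (g p₂)
      have h5 := dist_triangle (g p₁) (g p₂) p₂.1
      have h6 := dist_triangle p₁.1 (g p₂) p₂.1
      -- dist p₁ p₂ ≤ dist p₁ (g p₁) + dist (g p₁) (g p₂) + dist (g p₂) p₂
      have h7 : dist p₁.1 p₂.1 ≤ dist p₁.1 (g p₁) + dist (g p₁) (g p₂) + dist (g p₂) p₂.1 := by
        have := dist_triangle p₁.1 (g p₁) p₂.1
        have := dist_triangle (g p₁) (g p₂) p₂.1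
        linarith
      rw [dist_comm (g p₂) p₂.1] at h7
      linarith
    have hzsep : ∀ p : {x // x ∈ P}, s < dist z (g p) := by
      intro p
      have h1 := hcon p.1 (hPsub p.2)
      have h2 := hy2 p.1 p.2
      have h3 := dist_triangle z (g p) p.1
      rw [dist_comm (g p) p.1] at h3
      linarith
    set Q : Finset X := insert z (P.attach.image g) with hQ_def
    have hzni : z ∉ P.attach.image g := by
      intro hzi
      obtain ⟨p, _, hpz⟩ := Finset.mem_image.1 hzi
      have := hzsep p
      rw [hpz, dist_self] at this
      linarith
    have hinj : Set.InjOn g ↑P.attach := by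
      intro p₁ _ p₂ _ heq
      by_contra hne
      have hne' : p₁.1 ≠ p₂.1 := fun h => hne (Subtype.ext h)
      have := hgsep p₁ p₂ hne'
      rw [heq, dist_self] at this
      linarith
    have hQcard : Q.card = m + 1 := by
      rw [hQ_def, Finset.card_insert_of_notMem hzni, Finset.card_image_of_injOn hinj,
        Finset.card_attach, hPcard]
    have hQsub : ↑Q ⊆ (O F' : Set X) := by
      intro a ha
      rcases Finset.mem_insert.1 ha with h | h
      · exact h ▸ hz
      · obtain ⟨p, _, hpa⟩ := Finset.mem_image.1 h
        exact hpa ▸ hy1 p.1 p.2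
    have hQsep : ∀ p ∈ Q, ∀ q ∈ Q, p ≠ q → s < dist p q := by
      intro a ha b hb hab
      rcases Finset.mem_insert.1 ha with h1 | h1 <;> rcases Finset.mem_insert.1 hb with h2 | h2
      · exact absurd (h1.trans h2.symm) hab
      · obtain ⟨p, _, hpb⟩ := Finset.mem_image.1 h2
        subst h1; rw [← hpb]; exact hzsep p
      · obtain ⟨p, _, hpa⟩ := Finset.mem_image.1 h1
        subst h2; rw [← hpa, dist_comm]; exact hzsep p
      · obtain ⟨p₁, _, hp₁⟩ := Finset.mem_image.1 h1
        obtain ⟨p₂, _, hp₂⟩ := Finset.mem_image.1 h2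
        have hne : p₁.1 ≠ p₂.1 := by
          intro h
          apply hab
          rw [← hp₁, ← hp₂]
          congr 1
          exact Subtype.ext h
        rw [← hp₁, ← hp₂]
        exact hgsep p₁ p₂ hne
    have : m + 1 ∈ A := ⟨F', hF'ball, Q, hQsub, hQsep, hQcard⟩
    have := le_csSup hAbdd this
    omega

/-- The set of continuity points (w.r.t. the Hausdorff metric on the image) of a
lower semi-continuous map from a metric space `T` to the set of (nonempty) closed
subsets of a compact metric space `X` is residual. -/
theorem stmt0 {T X : Type*} [MetricSpace T] [MetricSpace X] [CompactSpace X]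
    (O : T → NonemptyCompacts X)
    (hlsc : ∀ F : T, ∀ ε > (0 : ℝ), ∃ δ > (0 : ℝ), ∀ F' : T, dist F F' < δ →
      ∀ x ∈ (O F : Set X), ∃ y ∈ (O F' : Set X), dist x y < ε) :
    {F : T | ContinuousAt O F} ∈ residual T := by
  classical
  set U : ℕ → Set T := fun n =>
    {G | ∃ F₁ δ, 0 < δ ∧ dist G F₁ < δ/2 ∧
      (∀ F', dist F₁ F' < δ → ∀ z ∈ (O F' : Set X), ∃ x ∈ (O F₁ : Set X),
        dist z x < 1/((n:ℝ)+1)) ∧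
      (∀ F', dist F₁ F' < δ → ∀ x ∈ (O F₁ : Set X), ∃ z ∈ (O F' : Set X),
        dist x z < 1/((n:ℝ)+1))} with hU
  have hUopen : ∀ n, IsOpen (U n) := by
    intro n
    rw [Metric.isOpen_iff]
    rintro G ⟨F₁, δ, hδ, hG, h1, h2⟩
    refine ⟨δ/2 - dist G F₁, by linarith, fun G' hG' => ?_⟩
    rw [Metric.mem_ball] at hG'
    refine ⟨F₁, δ, hδ, ?_, h1, h2⟩
    have := dist_triangle G' G F₁
    linarith
  have hUdense : ∀ n, Dense (U n) := by
    intro n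
    rw [Metric.dense_iff]
    intro F₀ r hr
    have hεn : (0:ℝ) < 1/((n:ℝ)+1) := by positivity
    obtain ⟨F₁, δ, hδ0, hball, hF₁mem, husc⟩ := dense_aux O hlsc hεn F₀ hr
    obtain ⟨δ₁, hδ₁0, hδ₁⟩ := hlsc F₁ (1/((n:ℝ)+1)) hεn
    refine ⟨F₁, hF₁mem, F₁, min δ δ₁, lt_min hδ0 hδ₁0, ?_, ?_, ?_⟩
    · rw [dist_self]
      have : 0 < min δ δ₁ := lt_min hδ0 hδ₁0
      linarith
    · intro F' hF'
      exact husc F' (lt_of_lt_of_le hF' (min_le_left _ _))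
    · intro F' hF'
      exact hδ₁ F' (lt_of_lt_of_le hF' (min_le_right _ _))
  have key : (⋂ n : ℕ, U n) ⊆ {F | ContinuousAt O F} := by
    intro G hG
    rw [Set.mem_setOf_eq, Metric.continuousAt_iff]
    intro ε hε
    obtain ⟨n, hn⟩ := exists_nat_one_div_lt (show (0:ℝ) < ε/3 by linarith)
    obtain ⟨F₁, δ, hδ, hGd, h1, h2⟩ := Set.mem_iInter.1 hG n
    refine ⟨δ/2 - dist G F₁, by linarith, ?_⟩
    intro F' hF'
    have hdG : dist F₁ G < δ := by rw [dist_comm]; linarith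
    have hdF' : dist F₁ F' < δ := by
      have h3 := dist_triangle F₁ G F'
      rw [dist_comm G F'] at h3
      rw [dist_comm F₁ G] at h3
      linarith
    have hOd : dist (O F') (O G) ≤ 2*(1/((n:ℝ)+1)) := by
      rw [NonemptyCompacts.dist_eq]
      apply Metric.hausdorffDist_le_of_mem_dist (by positivity)
      · intro x hx
        obtain ⟨p, hp, hxp⟩ := h1 F' hdF' x hx
        obtain ⟨q, hq, hpq⟩ := h2 G hdG p hp
        exact ⟨q, hq, by have := dist_triangle x p q; linarith⟩
      · intro x hx
        obtain ⟨p, hp, hxp⟩ := h1 G hdG x hx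
        obtain ⟨q, hq, hpq⟩ := h2 F' hdF' p hp
        exact ⟨q, hq, by have := dist_triangle x p q; linarith⟩
    calc dist (O F') (O G) ≤ 2*(1/((n:ℝ)+1)) := hOd
      _ < ε := by linarith
  exact Filter.mem_of_superset
    ((countable_iInter_mem).2 fun n => residual_of_dense_open (hUopen n) (hUdense n)) key
end

section
/- For the circle map F(x) = x + 0.1(1 − cos x) on ℝ/2πℤ, the ω-limit set of every point is {0}; hence the Milnor attractor is {0}, but the set {0} is not Lyapunov stable for F. -/
/-!
On the lift `x ↦ x + 0.1 (1 - cos x)` of `F` to `ℝ`, the points `2πk` are the only fixed points,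
the map is increasing and moves every point to the right. So the orbit of any `r ∈ (0, 2π]`
increases to the fixed point `2π`, i.e. every orbit on the circle converges to `0`. Orbits starting
just to the right of `0` therefore travel once around the circle, and since each step has length
at most `0.2` they cannot jump over the arc `[π/2, π/2 + 0.2]`, where `cos ≤ 0`.
-/

open Filter

/-- The ω-limit set of `x` under iteration of `F`. -/
def omegaSet {X : Type*} [TopologicalSpace X] (F : X → X) (x : X) : Set X :=
  {z | MapClusterPt z atTop fun n : ℕ => F^[n] x}

/-- The circle map `x ↦ x + 0.1 (1 - cos x)` on `ℝ/2πℤ`. -/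
noncomputable def circleF : Real.Angle → Real.Angle :=
  fun x => x + ((0.1 * (1 - Real.Angle.cos x) : ℝ) : Real.Angle)

open Function Real Set Topology

theorem omegaSet_eq_singleton_of_tendsto {X : Type*} [TopologicalSpace X] [T2Space X]
    {F : X → X} {x a : X} (h : Tendsto (fun n => F^[n] x) atTop (𝓝 a)) :
    omegaSet F x = {a} := by
  ext z
  refine ⟨fun hz => eq_of_nhds_neBot (ClusterPt.mono hz h), ?_⟩
  rintro rfl
  exact h.mapClusterPt

theorem exists_isFixedPt_tendsto_iterate {α : Type*} [ConditionallyCompleteLinearOrder α]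
    [TopologicalSpace α] [OrderTopology α] {f : α → α} (hf : Continuous f) (hmono : Monotone f)
    {r b : α} (hr : r ≤ f r) (hb : IsFixedPt f b) (hrb : r ≤ b) :
    ∃ l ∈ Icc r b, IsFixedPt f l ∧ Tendsto (fun n => f^[n] r) atTop (𝓝 l) := by
  have horbit : Monotone fun n => f^[n] r := hmono.monotone_iterate_of_le_map hr
  have hbdd : ∀ n, f^[n] r ≤ b := fun n => (hb.iterate n).eq ▸ hmono.iterate n hrb
  have hbddAbove : BddAbove (range fun n => f^[n] r) := ⟨b, forall_mem_range.2 hbdd⟩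
  have hlim := tendsto_atTop_ciSup horbit hbddAbove
  exact ⟨_, ⟨le_ciSup hbddAbove 0, ciSup_le hbdd⟩,
    isFixedPt_of_tendsto_iterate hlim hf.continuousAt, hlim⟩

theorem exists_mem_Icc_of_le_add {u : ℕ → ℝ} {c d : ℝ} (h0 : u 0 < c)
    (hstep : ∀ n, u (n + 1) ≤ u n + d) {N : ℕ} (hN : c ≤ u N) : ∃ n, u n ∈ Icc c (c + d) := by
  induction N with
  | zero => exact absurd hN h0.not_ge
  | succ N ih =>
    by_cases hc : c ≤ u N
    · exact ih hc
    · exact ⟨N + 1, hN, by linarith [hstep N]⟩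

noncomputable def liftF (x : ℝ) : ℝ := x + 0.1 * (1 - cos x)

theorem circleF_coe (x : ℝ) : circleF x = liftF x := by
  rw [circleF, liftF, Angle.cos_coe, Angle.coe_add]

theorem iterate_circleF_coe (x : ℝ) (n : ℕ) : circleF^[n] x = (liftF^[n] x : ℝ) :=
  (Semiconj.iterate_right (f := ((↑) : ℝ → Angle)) (fun y => (circleF_coe y).symm) n x).symm

theorem continuous_liftF : Continuous liftF := by
  unfold liftF
  fun_prop

theorem hasDerivAt_liftF (x : ℝ) : HasDerivAt liftF (1 + 0.1 * sin x) x := by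
  have h := (hasDerivAt_id' x).add (((hasDerivAt_const x 1).sub (hasDerivAt_cos x)).const_mul 0.1)
  rwa [zero_sub, neg_neg] at h

theorem strictMono_liftF : StrictMono liftF :=
  strictMono_of_hasDerivAt_pos hasDerivAt_liftF fun x => by nlinarith [neg_one_le_sin x]

theorem self_le_liftF (x : ℝ) : x ≤ liftF x := by
  unfold liftF
  nlinarith [cos_le_one x]

theorem liftF_le_add (x : ℝ) : liftF x ≤ x + 0.2 := by
  unfold liftF
  nlinarith [neg_one_le_cos x]

theorem isFixedPt_liftF_iff {x : ℝ} : IsFixedPt liftF x ↔ cos x = 1 := by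
  unfold IsFixedPt liftF
  constructor <;> intro h <;> linarith

theorem tendsto_iterate_liftF {r : ℝ} (h0 : 0 < r) (h2π : r ≤ 2 * π) :
    Tendsto (fun n => liftF^[n] r) atTop (𝓝 (2 * π)) := by
  obtain ⟨l, ⟨hrl, hl2π⟩, hfix, hlim⟩ :=
    exists_isFixedPt_tendsto_iterate continuous_liftF strictMono_liftF.monotone
      (self_le_liftF r) (isFixedPt_liftF_iff.2 cos_two_pi) h2π
  suffices l = 2 * π from this ▸ hlim
  by_contra hne
  have := (cos_eq_one_iff_of_lt_of_lt (by linarith [pi_pos]) (hl2π.lt_of_ne hne)).1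
    (isFixedPt_liftF_iff.1 hfix)
  linarith

theorem tendsto_iterate_circleF (θ : Angle) : Tendsto (fun n => circleF^[n] θ) atTop (𝓝 0) := by
  have : Fact (0 < 2 * π) := ⟨two_pi_pos⟩
  obtain ⟨r, ⟨hr0, hr2π⟩, rfl⟩ : ∃ r ∈ Ioc 0 (0 + 2 * π), (r : Angle) = θ :=
    ⟨_, (AddCircle.equivIoc (2 * π) 0 θ).2, AddCircle.coe_equivIoc⟩
  have hlim := (Angle.continuous_coe.tendsto _).comp
    (tendsto_iterate_liftF hr0 (by simpa using hr2π))
  rw [Angle.coe_two_pi] at hlim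
  simpa [comp_def, ← iterate_circleF_coe] using hlim

theorem exists_iterate_liftF_mem_Icc {x c : ℝ} (hx0 : 0 < x) (hxc : x < c) (hc : c < 2 * π) :
    ∃ n, liftF^[n] x ∈ Icc c (c + 0.2) := by
  obtain ⟨N, hN⟩ :=
    ((tendsto_iterate_liftF hx0 (by linarith)).eventually (eventually_ge_nhds hc)).exists
  refine exists_mem_Icc_of_le_add hxc (fun n => ?_) hN
  rw [iterate_succ_apply']
  exact liftF_le_add _

theorem not_lyapunovStable_circleF_zero :
    ¬ (∀ U : Set Angle, IsOpen U → (0 : Angle) ∈ U →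
        ∃ V : Set Angle, IsOpen V ∧ (0 : Angle) ∈ V ∧ ∀ x ∈ V, ∀ n : ℕ, circleF^[n] x ∈ U) := by
  intro hstable
  obtain ⟨V, hV, hV0, hVorbit⟩ := hstable {θ | 0 < θ.cos}
    (isOpen_lt continuous_const Angle.continuous_cos) (by simp)
  have hVnhds : ∀ᶠ x : ℝ in 𝓝 0, (x : Angle) ∈ V :=
    (hV.preimage Angle.continuous_coe).mem_nhds hV0
  obtain ⟨x, hxV, hx0, hxπ⟩ :=
    ((hVnhds.filter_mono nhdsWithin_le_nhds).and (Ioo_mem_nhdsGT (half_pos pi_pos))).exists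
  obtain ⟨n, hn₁, hn₂⟩ := exists_iterate_liftF_mem_Icc hx0 hxπ (by linarith [pi_pos])
  have hpos : 0 < (circleF^[n] x).cos := hVorbit x hxV n
  rw [iterate_circleF_coe, Angle.cos_coe] at hpos
  exact hpos.not_ge (cos_nonpos_of_pi_div_two_le_of_le hn₁ (by linarith [pi_gt_three]))

/-- For `F(x) = x + 0.1(1 - cos x)` on the circle `ℝ/2πℤ`, the ω-limit set of every point
is `{0}` (hence the Milnor attractor is `{0}`), but `{0}` is not Lyapunov stable. -/
theorem stmt7 :
    (∀ x : Real.Angle, omegaSet circleF x = {0}) ∧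
    ¬ (∀ U : Set Real.Angle, IsOpen U → (0 : Real.Angle) ∈ U →
        ∃ V : Set Real.Angle, IsOpen V ∧ (0 : Real.Angle) ∈ V ∧
          ∀ x ∈ V, ∀ n : ℕ, circleF^[n] x ∈ U) :=
  ⟨fun θ => omegaSet_eq_singleton_of_tendsto (tendsto_iterate_circleF θ),
    not_lyapunovStable_circleF_zero⟩
end
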